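/- arXiv:1907.09129 — 2 statements merged into one kernel-verified Lean document; each statement's English description precedes it below -/
import Mathlib

section
/- Let α > 0 be a real number and let λ : ℕ → ℂ be a bounded arithmetic function. For n > 1 let p(n) denote the smallest prime divisor of n, P(n) the largest prime divisor of n, ω(n) the number of distinct prime divisors of n, and μ the Möbius function. Define S_{λ,α}(x) = Σ_{1 < n ≤ x} λ(ω(n)) (p(n)/P(n))^α, and for each integer i ≥ 1 define Σ^{(i)}(x) = Σ_{1 < n ≤ x, μ(n) ≠ 0, ω(n) = i} (p(n)/P(n))^α. Then for every constant A > 0, S_{λ,α}(x) = Σ_{i=1}^∞ λ(i) Σ^{(i)}(x) + O(x/(log x)^A) as x → ∞. -/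
/-!
Subtracting the two sides leaves only the non-squarefree `n ≤ x`, each weighted by at most `C`.
Put `L = log x` and `K = A + A / α`. A non-squarefree `n` is divisible by `q²` for some prime `q`;
either `q > L ^ A`, which happens for at most `2x / L ^ A` integers `n ≤ x`; or all prime factors
of `n` are below `L ^ K`, and by Rankin's trick there are `O(x / L ^ A)` such `n ≤ x`; or
`p(n) ≤ q ≤ L ^ A` and `P(n) ≥ L ^ K`, so that `(p(n) / P(n)) ^ α ≤ L ^ (-A)`.
-/

open Filter Finset Real Asymptotics

lemma tsum_succ_mul_sum_fiber_eq_sum {R : Type*} [NonUnitalNonAssocSemiring R]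
    [TopologicalSpace R] [ContinuousAdd R] [T2Space R] (s : Finset ℕ) {ω : ℕ → ℕ}
    (hω : ∀ n ∈ s, ω n ≠ 0) (lam g : ℕ → R) :
    ∑' i, lam (i + 1) * ∑ n ∈ s with ω n = i + 1, g n = ∑ n ∈ s, lam (ω n) * g n := by
  refine HasSum.tsum_eq ?_
  have hterm (i : ℕ) : lam (i + 1) * ∑ n ∈ s with ω n = i + 1, g n
      = ∑ n ∈ s, if i = ω n - 1 then lam (ω n) * g n else 0 := by
    rw [mul_sum, sum_filter]
    refine sum_congr rfl fun n hn => ?_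
    have := hω n hn
    by_cases h : ω n = i + 1
    · rw [if_pos h, if_pos (by omega), h]
    · rw [if_neg h, if_neg (by omega)]
  simp_rw [hterm]
  exact hasSum_sum fun n _ => hasSum_ite_eq _ _

lemma Nat.sup_primeFactors_mem {n : ℕ} (hn : 1 < n) :
    n.primeFactors.sup id ∈ n.primeFactors := by
  obtain ⟨p, hp, he⟩ := exists_mem_eq_sup _ (Nat.nonempty_primeFactors.mpr hn) id
  exact he ▸ hp

lemma Nat.le_sup_primeFactors {n p : ℕ} (hp : p.Prime) (hpn : p ∣ n) (hn : n ≠ 0) :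
    p ≤ n.primeFactors.sup id :=
  le_sup (f := id) (Nat.mem_primeFactors.mpr ⟨hp, hpn, hn⟩)

/-- `(p(n) / P(n)) ^ α`; for `n ≤ 1` the largest prime factor is read as `0`, so the value is `0`
when `α > 0`. -/
noncomputable def primeFactorRatio (α : ℝ) (n : ℕ) : ℝ :=
  ((n.minFac : ℝ) / ((n.primeFactors.sup id : ℕ) : ℝ)) ^ α

lemma primeFactorRatio_nonneg (α : ℝ) (n : ℕ) : 0 ≤ primeFactorRatio α n :=
  rpow_nonneg (by positivity) _

lemma primeFactorRatio_le_one {α : ℝ} (hα : 0 ≤ α) (n : ℕ) : primeFactorRatio α n ≤ 1 := by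
  refine rpow_le_one (by positivity) ?_ hα
  rcases lt_or_ge 1 n with hn | hn
  · obtain ⟨hP, hPn, -⟩ := Nat.mem_primeFactors.mp (Nat.sup_primeFactors_mem hn)
    rw [div_le_one (by exact_mod_cast hP.pos)]
    exact_mod_cast Nat.minFac_le_of_dvd hP.two_le hPn
  · have : n.primeFactors = ∅ := by interval_cases n <;> simp
    simp [this]

lemma exists_sq_dvd_or_mem_smoothNumbers_or_primeFactorRatio_le {α : ℝ} (hα : 0 ≤ α)
    (y : ℝ) {z : ℝ} (hz : 0 < z) {n : ℕ} (hn : n ≠ 0) (hsq : ¬ Squarefree n) :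
    (∃ q : ℕ, y < q ∧ q ^ 2 ∣ n) ∨ n ∈ Nat.smoothNumbers ⌈z⌉₊ ∨
      primeFactorRatio α n ≤ (y / z) ^ α := by
  obtain ⟨q, hq, hqn⟩ : ∃ q : ℕ, q.Prime ∧ q * q ∣ n := by
    simpa [Nat.squarefree_iff_prime_squarefree] using hsq
  by_cases hyq : y < q
  · exact Or.inl ⟨q, hyq, by rwa [sq]⟩
  by_cases hPz : ((n.primeFactors.sup id : ℕ) : ℝ) < z
  · refine Or.inr (Or.inl (Nat.mem_smoothNumbers'.mpr fun p hp hpn => Nat.lt_ceil.mpr ?_))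
    exact lt_of_le_of_lt (by exact_mod_cast Nat.le_sup_primeFactors hp hpn hn) hPz
  refine Or.inr (Or.inr (rpow_le_rpow (by positivity) ?_ hα))
  have hmin : (n.minFac : ℝ) ≤ q := by
    exact_mod_cast Nat.minFac_le_of_dvd hq.two_le (dvd_of_mul_right_dvd hqn)
  exact div_le_div₀ (by linarith [q.cast_nonneg (α := ℝ)]) (hmin.trans (not_lt.mp hyq)) hz
    (not_lt.mp hPz)

open scoped Classical in
lemma sum_primeFactorRatio_le {α : ℝ} (hα : 0 ≤ α) {y z : ℝ} (hy : 0 ≤ y) (hz : 0 < z)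
    (s : Finset ℕ) (hs : ∀ n ∈ s, n ≠ 0 ∧ ¬ Squarefree n) :
    ∑ n ∈ s, primeFactorRatio α n ≤ #{n ∈ s | ∃ q : ℕ, y < q ∧ q ^ 2 ∣ n}
      + #{n ∈ s | n ∈ Nat.smoothNumbers ⌈z⌉₊} + #s * (y / z) ^ α := by
  have hyz : 0 ≤ (y / z) ^ α := by positivity
  calc ∑ n ∈ s, primeFactorRatio α n
      ≤ ∑ n ∈ s, ((if ∃ q : ℕ, y < q ∧ q ^ 2 ∣ n then 1 else 0)
          + (if n ∈ Nat.smoothNumbers ⌈z⌉₊ then 1 else 0) + (y / z) ^ α) := by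
        refine sum_le_sum fun n hn => ?_
        have hle := primeFactorRatio_le_one hα n
        rcases exists_sq_dvd_or_mem_smoothNumbers_or_primeFactorRatio_le hα y hz (hs n hn).1
          (hs n hn).2 with h | h | h
        · rw [if_pos h]; split_ifs <;> linarith
        · rw [if_pos h]; split_ifs <;> linarith
        · split_ifs <;> linarith
    _ = _ := by
        rw [sum_add_distrib, sum_add_distrib, sum_boole, sum_boole, sum_const, nsmul_eq_mul]

open scoped Classical in
lemma card_filter_exists_sq_dvd_le (N : ℕ) {y : ℝ} (hy : 0 < y) :
    (#{n ∈ Ioc 0 N | ∃ q : ℕ, y < q ∧ q ^ 2 ∣ n} : ℝ) ≤ 2 * N / y := by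
  have hsub : {n ∈ Ioc 0 N | ∃ q : ℕ, y < q ∧ q ^ 2 ∣ n}
      ⊆ (Ioo ⌊y⌋₊ (N + 1)).biUnion fun q => {n ∈ Ioc 0 N | q ^ 2 ∣ n} := by
    intro n hn
    obtain ⟨hnN, q, hyq, hqn⟩ := mem_filter.mp hn
    obtain ⟨hn0, hnN⟩ := mem_Ioc.mp hnN
    refine mem_biUnion.mpr ⟨q, mem_Ioo.mpr ⟨(Nat.floor_lt hy.le).mpr hyq, ?_⟩,
      mem_filter.mpr ⟨mem_Ioc.mpr ⟨hn0, hnN⟩, hqn⟩⟩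
    have := Nat.le_of_dvd hn0 hqn
    nlinarith
  calc (#{n ∈ Ioc 0 N | ∃ q : ℕ, y < q ∧ q ^ 2 ∣ n} : ℝ)
      ≤ ∑ q ∈ Ioo ⌊y⌋₊ (N + 1), (#{n ∈ Ioc 0 N | q ^ 2 ∣ n} : ℝ) := by
        exact_mod_cast (card_le_card hsub).trans card_biUnion_le
    _ ≤ ∑ q ∈ Ioo ⌊y⌋₊ (N + 1), N * ((q : ℝ) ^ 2)⁻¹ := by
        refine sum_le_sum fun q _ => ?_
        rw [Nat.Ioc_filter_dvd_card_eq_div, ← div_eq_mul_inv]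
        exact_mod_cast Nat.cast_div_le
    _ = N * ∑ q ∈ Ioo ⌊y⌋₊ (N + 1), ((q : ℝ) ^ 2)⁻¹ := (mul_sum _ _ _).symm
    _ ≤ N * (2 / (⌊y⌋₊ + 1)) := by gcongr; exact sum_Ioo_inv_sq_le _ _
    _ ≤ 2 * N / y := by
        rw [mul_div_assoc', mul_comm]
        gcongr
        exact (Nat.lt_floor_add_one y).le

@[simps]
noncomputable def natRpowNegHom (σ : ℝ) : ℕ →* ℝ where
  toFun n := (n : ℝ) ^ (-σ)
  map_one' := by simp
  map_mul' m n := by push_cast; exact mul_rpow m.cast_nonneg n.cast_nonneg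

/-- Rankin's trick: `1 ≤ (N / n) ^ σ` for `n ≤ N`, and the Dirichlet series of the `k`-smooth
numbers is an Euler product. -/
lemma card_smoothNumbersUpTo_le_rpow_mul_prod {σ : ℝ} (hσ : 0 < σ) (N k : ℕ) :
    (#(N.smoothNumbersUpTo k) : ℝ) ≤
      (N : ℝ) ^ σ * ∏ p ∈ k.primesBelow, (1 - (p : ℝ) ^ (-σ))⁻¹ := by
  have hnorm {p : ℕ} (hp : p.Prime) : ‖natRpowNegHom σ p‖ < 1 := by
    rw [natRpowNegHom_apply, norm_of_nonneg (by positivity)]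
    exact rpow_lt_one_of_one_lt_of_neg (by exact_mod_cast hp.one_lt) (by linarith)
  have hEuler :=
    (EulerProduct.summable_and_hasSum_smoothNumbers_prod_primesBelow_geometric hnorm k).2
  calc (#(N.smoothNumbersUpTo k) : ℝ)
      = ∑ n ∈ N.smoothNumbersUpTo k, (1 : ℝ) := by simp
    _ ≤ ∑ n ∈ N.smoothNumbersUpTo k, (N : ℝ) ^ σ * natRpowNegHom σ n := by
        refine sum_le_sum fun n hn => ?_
        obtain ⟨hnN, hn⟩ := Nat.mem_smoothNumbersUpTo.mp hn
        have hn0 : (0 : ℝ) < n := by exact_mod_cast Nat.pos_of_ne_zero hn.1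
        rw [natRpowNegHom_apply, rpow_neg hn0.le, ← div_eq_mul_inv,
          ← div_rpow (by positivity) hn0.le]
        exact one_le_rpow ((one_le_div hn0).mpr (by exact_mod_cast hnN)) hσ.le
    _ = (N : ℝ) ^ σ * ∑ n ∈ N.smoothNumbersUpTo k, natRpowNegHom σ n := (mul_sum _ _ _).symm
    _ ≤ (N : ℝ) ^ σ * ∏ p ∈ k.primesBelow, (1 - (p : ℝ) ^ (-σ))⁻¹ := by
        gcongr
        rw [← sum_subtype_of_mem (fun n => natRpowNegHom σ n)
          (fun n hn => (Nat.mem_smoothNumbersUpTo.mp hn).2)]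
        exact sum_le_hasSum _ (fun n _ => by rw [natRpowNegHom_apply]; positivity) hEuler

lemma inv_one_sub_le_exp {t : ℝ} (h0 : 0 ≤ t) (h : t ≤ 3 / 4) : (1 - t)⁻¹ ≤ exp (4 * t) :=
  calc (1 - t)⁻¹ ≤ 1 + 4 * t := by rw [inv_le_iff_one_le_mul₀ (by linarith)]; nlinarith
    _ ≤ exp (4 * t) := by linarith [add_one_le_exp (4 * t)]

lemma rpow_neg_le_three_quarters {p σ : ℝ} (hp : 2 ≤ p) (hσ : 1 / 2 ≤ σ) :
    p ^ (-σ) ≤ 3 / 4 := by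
  have hsqrt : 4 / 3 ≤ √2 := le_sqrt_of_sq_le (by norm_num)
  have : 4 / 3 ≤ p ^ σ :=
    calc 4 / 3 ≤ (2 : ℝ) ^ (1 / 2 : ℝ) := by rwa [← sqrt_eq_rpow]
      _ ≤ p ^ (1 / 2 : ℝ) := by gcongr
      _ ≤ p ^ σ := rpow_le_rpow_of_exponent_le (by linarith) hσ
  rw [rpow_neg (by linarith)]
  exact inv_le_of_inv_le₀ (by norm_num) (by linarith)

lemma rpow_neg_le_two_div {p σ : ℝ} (hp : 0 < p) (h : (1 - σ) * log p ≤ 1 / 2) :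
    p ^ (-σ) ≤ 2 / p := by
  have h2 : p ^ (1 - σ) ≤ 2 :=
    calc p ^ (1 - σ) = exp ((1 - σ) * log p) := by rw [rpow_def_of_pos hp, mul_comm]
      _ ≤ exp (log 2) := exp_le_exp.mpr (by linarith [log_two_gt_d9])
      _ = 2 := exp_log two_pos
  calc p ^ (-σ) = p ^ (1 - σ) / p := by
        rw [rpow_sub hp, rpow_one, rpow_neg hp.le]; field_simp
    _ ≤ 2 / p := by gcongr

lemma sum_primesBelow_inv_le (k : ℕ) : ∑ p ∈ k.primesBelow, (p : ℝ)⁻¹ ≤ 1 + log k := by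
  calc ∑ p ∈ k.primesBelow, (p : ℝ)⁻¹ ≤ ∑ p ∈ Icc 1 k, (p : ℝ)⁻¹ := by
        refine sum_le_sum_of_subset_of_nonneg (fun p hp => ?_) fun _ _ _ => by positivity
        obtain ⟨hpk, hp⟩ := Nat.mem_primesBelow.mp hp
        exact mem_Icc.mpr ⟨hp.one_lt.le, hpk.le⟩
    _ = harmonic k := by rw [harmonic_eq_sum_Icc]; push_cast; rfl
    _ ≤ 1 + log k := harmonic_le_one_add_log k

lemma prod_primesBelow_inv_one_sub_rpow_neg_le {k : ℕ} {σ : ℝ} (hσ : 1 / 2 ≤ σ) (hσ1 : σ ≤ 1)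
    (hk : (1 - σ) * log k ≤ 1 / 2) :
    ∏ p ∈ k.primesBelow, (1 - (p : ℝ) ^ (-σ))⁻¹ ≤ exp (8 * (1 + log k)) := by
  have hterm {p : ℕ} (hp : p ∈ k.primesBelow) :
      0 ≤ (1 - (p : ℝ) ^ (-σ))⁻¹ ∧ (1 - (p : ℝ) ^ (-σ))⁻¹ ≤ exp (8 * (p : ℝ)⁻¹) := by
    obtain ⟨hpk, hp⟩ := Nat.mem_primesBelow.mp hp
    have hp2 : (2 : ℝ) ≤ p := by exact_mod_cast hp.two_le
    have h34 := rpow_neg_le_three_quarters hp2 hσ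
    have h2p := rpow_neg_le_two_div (by linarith) (le_trans (by gcongr) hk : (1 - σ) * log p ≤ _)
    rw [div_eq_mul_inv] at h2p
    refine ⟨inv_nonneg.mpr (by linarith), (inv_one_sub_le_exp (by positivity) h34).trans ?_⟩
    exact exp_le_exp.mpr (by linarith)
  calc ∏ p ∈ k.primesBelow, (1 - (p : ℝ) ^ (-σ))⁻¹
      ≤ ∏ p ∈ k.primesBelow, exp (8 * (p : ℝ)⁻¹) :=
        prod_le_prod (fun p hp => (hterm hp).1) fun p hp => (hterm hp).2
    _ = exp (8 * ∑ p ∈ k.primesBelow, (p : ℝ)⁻¹) := by rw [← exp_sum, mul_sum]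
    _ ≤ exp (8 * (1 + log k)) := by gcongr; exact sum_primesBelow_inv_le k

theorem card_smoothNumbersUpTo_le_mul_exp {N k : ℕ} {x : ℝ} (hk : 1 ≤ log k) (hx : 0 < x)
    (hNx : (N : ℝ) ≤ x) :
    (#(N.smoothNumbersUpTo k) : ℝ) ≤ x * exp (8 * (1 + log k) - log x / (2 * log k)) := by
  set σ := 1 - 1 / (2 * log k) with hσ
  have hδ : 1 / (2 * log k) ≤ 1 / 2 := by
    rw [div_le_div_iff₀ (by positivity) (by norm_num)]; linarith
  have hδ0 : 0 ≤ 1 / (2 * log k) := by positivity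
  have hσk : (1 - σ) * log k = 1 / 2 := by rw [hσ]; field_simp; ring
  calc (#(N.smoothNumbersUpTo k) : ℝ)
      ≤ (N : ℝ) ^ σ * ∏ p ∈ k.primesBelow, (1 - (p : ℝ) ^ (-σ))⁻¹ :=
        card_smoothNumbersUpTo_le_rpow_mul_prod (by linarith) N k
    _ ≤ (N : ℝ) ^ σ * exp (8 * (1 + log k)) := by
        gcongr
        exact prod_primesBelow_inv_one_sub_rpow_neg_le (by linarith) (by linarith) hσk.le
    _ ≤ x ^ σ * exp (8 * (1 + log k)) := by gcongr; linarith
    _ = exp (log x) * exp (8 * (1 + log k) - log x / (2 * log k)) := by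
        rw [rpow_def_of_pos hx, ← exp_add, ← exp_add, hσ]; ring_nf
    _ = x * exp (8 * (1 + log k) - log x / (2 * log k)) := by rw [exp_log hx]

lemma eventually_mul_log_sq_le (D : ℝ) : ∀ᶠ L in atTop, D * log L ^ 2 ≤ L := by
  have hD : 0 < |D| + 1 := by positivity
  filter_upwards [(isLittleO_pow_log_id_atTop (n := 2)).bound (inv_pos.mpr hD),
    eventually_ge_atTop 0] with L hL hL0
  rw [norm_pow, norm_eq_abs, sq_abs, id, norm_of_nonneg hL0, ← div_eq_inv_mul,
    le_div_iff₀ hD] at hL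
  nlinarith [le_abs_self D, sq_nonneg (log L)]

/-- Holds because `log ⌈L ^ K⌉₊ = O(log L)` while `(log L) ^ 2 = o(L)`. -/
lemma eventually_rankin_exponent_le {K : ℝ} (hK : 0 < K) (A : ℝ) :
    ∀ᶠ L in atTop, 1 ≤ log ⌈L ^ K⌉₊ ∧
      8 * (1 + log ⌈L ^ K⌉₊) - L / (2 * log ⌈L ^ K⌉₊) ≤ 8 - A * log L := by
  filter_upwards [eventually_ge_atTop 2, (tendsto_rpow_atTop hK).eventually_ge_atTop (exp 1),
    eventually_mul_log_sq_le (2 * (K + 1) * (8 * (K + 1) + A))] with L hL2 hLK hlog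
  have hL0 : 0 < L := by linarith
  have hk : exp 1 ≤ ⌈L ^ K⌉₊ := hLK.trans (Nat.le_ceil _)
  have hk1 : 1 ≤ log ⌈L ^ K⌉₊ := (le_log_iff_exp_le ((exp_pos 1).trans_le hk)).mpr hk
  have hkL : log ⌈L ^ K⌉₊ ≤ (K + 1) * log L := by
    rw [← log_rpow hL0]
    refine log_le_log ((exp_pos 1).trans_le hk) ?_
    have : 1 ≤ L ^ K := one_le_rpow (by linarith) hK.le
    rw [rpow_add hL0, rpow_one]
    nlinarith [Nat.ceil_lt_add_one (rpow_nonneg hL0.le K)]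
  have hKL : 0 < (K + 1) * log L := by linarith
  have h1 : L / (2 * ((K + 1) * log L)) ≤ L / (2 * log ⌈L ^ K⌉₊) := by gcongr
  have h2 : (8 * (K + 1) + A) * log L ≤ L / (2 * ((K + 1) * log L)) := by
    rw [le_div_iff₀ (by positivity)]; nlinarith
  exact ⟨hk1, by linarith⟩

theorem card_smoothNumbersUpTo_ceil_log_rpow_isBigO {K : ℝ} (hK : 0 < K) (A : ℝ) :
    (fun x : ℝ => (#(⌊x⌋₊.smoothNumbersUpTo ⌈log x ^ K⌉₊) : ℝ)) =O[atTop]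
      fun x => x / log x ^ A := by
  refine IsBigO.of_bound (exp 8) ?_
  filter_upwards [tendsto_log_atTop.eventually (eventually_rankin_exponent_le hK A),
    eventually_gt_atTop 1] with x ⟨hk, hexp⟩ hx
  have hL : 0 < log x := log_pos hx
  rw [norm_of_nonneg (by positivity), norm_of_nonneg (by positivity)]
  calc (#(⌊x⌋₊.smoothNumbersUpTo ⌈log x ^ K⌉₊) : ℝ)
      ≤ x * exp (8 * (1 + log ⌈log x ^ K⌉₊) - log x / (2 * log ⌈log x ^ K⌉₊)) :=
        card_smoothNumbersUpTo_le_mul_exp hk (by linarith) (Nat.floor_le (by linarith))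
    _ ≤ x * exp (8 - A * log (log x)) := by gcongr
    _ = exp 8 * (x / log x ^ A) := by
        rw [sub_eq_add_neg, exp_add, rpow_def_of_pos hL, div_eq_mul_inv, ← exp_neg]; ring_nf

theorem sum_primeFactorRatio_not_squarefree_isBigO {α : ℝ} (hα : 0 < α) {A : ℝ} (hA : 0 < A) :
    (fun x : ℝ => ∑ n ∈ Icc 2 ⌊x⌋₊ with ¬ Squarefree n, primeFactorRatio α n)
      =O[atTop] fun x => x / log x ^ A := by
  classical
  set K := A + A / α with hK
  have hbound : ∀ᶠ x : ℝ in atTop,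
      ∑ n ∈ Icc 2 ⌊x⌋₊ with ¬ Squarefree n, primeFactorRatio α n
        ≤ 3 * (x / log x ^ A) + #(⌊x⌋₊.smoothNumbersUpTo ⌈log x ^ K⌉₊) := by
    filter_upwards [eventually_gt_atTop 1] with x hx
    have hL : 0 < log x := log_pos hx
    set N := ⌊x⌋₊
    set s := {n ∈ Icc 2 N | ¬ Squarefree n}
    have hs : ∀ n ∈ s, n ≠ 0 ∧ n ≤ N := by
      intro n hn; have := mem_Icc.mp (mem_filter.mp hn).1; omega
    have hNx : (N : ℝ) ≤ x := Nat.floor_le (by linarith)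
    have h1 : (#{n ∈ s | ∃ q : ℕ, log x ^ A < q ∧ q ^ 2 ∣ n} : ℝ) ≤ 2 * (x / log x ^ A) :=
      calc (#{n ∈ s | ∃ q : ℕ, log x ^ A < q ∧ q ^ 2 ∣ n} : ℝ)
          ≤ #{n ∈ Ioc 0 N | ∃ q : ℕ, log x ^ A < q ∧ q ^ 2 ∣ n} := by
            gcongr
            exact fun n hn => mem_Ioc.mpr ⟨Nat.pos_of_ne_zero (hs n hn).1, (hs n hn).2⟩
        _ ≤ 2 * N / log x ^ A := card_filter_exists_sq_dvd_le N (by positivity)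
        _ ≤ 2 * (x / log x ^ A) := by rw [mul_div_assoc]; gcongr
    have h2 : (#{n ∈ s | n ∈ Nat.smoothNumbers ⌈log x ^ K⌉₊} : ℝ)
        ≤ #(N.smoothNumbersUpTo ⌈log x ^ K⌉₊) := by
      refine Nat.cast_le.mpr (card_le_card fun n hn => ?_)
      obtain ⟨hn, hsm⟩ := mem_filter.mp hn
      exact Nat.mem_smoothNumbersUpTo.mpr ⟨(hs n hn).2, hsm⟩
    have hratio : (log x ^ A / log x ^ K) ^ α = (log x ^ A)⁻¹ := by
      rw [← rpow_sub hL, ← rpow_mul hL.le, ← rpow_neg hL.le]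
      congr 1
      rw [hK]
      field_simp
      ring
    have h3 : (#s : ℝ) * (log x ^ A / log x ^ K) ^ α ≤ x / log x ^ A := by
      rw [hratio, ← div_eq_mul_inv]
      gcongr
      refine le_trans ?_ hNx
      exact_mod_cast (card_filter_le _ _).trans (by simp)
    have := sum_primeFactorRatio_le hα.le (y := log x ^ A) (z := log x ^ K) (by positivity)
      (by positivity) s fun n hn => ⟨(hs n hn).1, (mem_filter.mp hn).2⟩
    linarith
  have hΨ := card_smoothNumbersUpTo_ceil_log_rpow_isBigO (K := K) (by positivity) A
  refine (IsBigO.of_bound' ?_).trans (((isBigO_refl _ _).const_mul_left 3).add hΨ)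
  filter_upwards [hbound, eventually_gt_atTop 1] with x hx hx1
  rw [norm_of_nonneg (sum_nonneg fun n _ => primeFactorRatio_nonneg α n),
    norm_of_nonneg (by have := log_pos hx1; positivity)]
  exact hx

/-- For `α > 0`, bounded `λ : ℕ → ℂ` and any `A > 0`,
`S_{λ,α}(x) = Σ_{i=1}^∞ λ(i) Σ^{(i)}(x) + O(x/(log x)^A)`, where
`Σ^{(i)}(x) = Σ_{1 < n ≤ x, n squarefree, ω(n)=i} (p(n)/P(n))^α`. -/
theorem weighted_sum_eq_sum_over_squarefree_by_omega
    (α : ℝ) (hα : 0 < α) (lam : ℕ → ℂ) (C : ℝ)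
    (hlam : ∀ n, ‖lam n‖ ≤ C) (A : ℝ) (hA : 0 < A) :
    (fun x : ℝ =>
        (∑ n ∈ Finset.Icc 2 ⌊x⌋₊,
            lam n.primeFactors.card *
              ((((n.minFac : ℝ) / ((n.primeFactors.sup id : ℕ) : ℝ)) ^ α : ℝ) : ℂ))
        - ∑' i : ℕ, lam (i + 1) *
            (((∑ n ∈ (Finset.Icc 2 ⌊x⌋₊).filter
                  (fun n => Squarefree n ∧ n.primeFactors.card = i + 1),
                ((n.minFac : ℝ) / ((n.primeFactors.sup id : ℕ) : ℝ)) ^ α) : ℝ) : ℂ))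
      =O[atTop] (fun x : ℝ => x / Real.log x ^ A) := by
  refine IsBigO.trans (IsBigO.of_bound C (Eventually.of_forall fun x => ?_))
    (sum_primeFactorRatio_not_squarefree_isBigO hα hA)
  change ‖∑ n ∈ Icc 2 ⌊x⌋₊, lam n.primeFactors.card * (primeFactorRatio α n : ℂ)
    - ∑' i : ℕ, lam (i + 1) * ((∑ n ∈ Icc 2 ⌊x⌋₊ with Squarefree n ∧ n.primeFactors.card = i + 1,
        primeFactorRatio α n : ℝ) : ℂ)‖ ≤ _
  have hω : ∀ n ∈ {n ∈ Icc 2 ⌊x⌋₊ | Squarefree n}, n.primeFactors.card ≠ 0 := fun n hn =>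
    (card_pos.mpr (Nat.nonempty_primeFactors.mpr (mem_Icc.mp (mem_filter.mp hn).1).1)).ne'
  push_cast
  simp_rw [← filter_filter]
  rw [tsum_succ_mul_sum_fiber_eq_sum _ hω, ← sum_filter_add_sum_filter_not _ (Squarefree ·),
    add_sub_cancel_left, norm_of_nonneg (sum_nonneg fun n _ => primeFactorRatio_nonneg α n),
    mul_sum]
  refine (norm_sum_le _ _).trans (sum_le_sum fun n _ => ?_)
  rw [norm_mul, Complex.norm_real, norm_of_nonneg (primeFactorRatio_nonneg α n)]
  exact mul_le_mul_of_nonneg_right (hlam _) (primeFactorRatio_nonneg α n)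
end

section
/- Let α > 0 be a real number. Then as x → ∞, ∫₁^{(log x)^{4/α}} dt/(t^{2α+1} · log(√x/t) · log(√x·t)) = (2/α)·1/(log x)^2 + O(1/(log x)^4). -/
/-!
Write `L = log x` and `u = log t`, so that the integrand is `t^{-(2α+1)} / (L²/4 - u²)`.
On the range of integration `0 ≤ u ≤ L/4`, hence replacing `1 / (L²/4 - u²)` by `4 / L²` costs at
most `(64/3) u² / L⁴`, and `u² ≤ (4/α²) t^α`. The error is therefore bounded by
`L⁻⁴ t^{-(α+1)}` up to a constant, which is integrable on `[1, ∞)`. The main term integrates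
exactly to `(2/α) (1 - L⁻⁸) / L²`.
-/

open Filter Real MeasureTheory

theorem sq_log_le_rpow {α t : ℝ} (hα : 0 < α) (ht : 1 ≤ t) :
    log t ^ 2 ≤ 4 / α ^ 2 * t ^ α := by
  have hlog : log t ≤ t ^ (α / 2) / (α / 2) := log_le_rpow_div (by linarith) (by positivity)
  have hsq : (t ^ (α / 2)) ^ 2 = t ^ α := by
    rw [← rpow_natCast, ← rpow_mul (by linarith)]; norm_num
  calc log t ^ 2 ≤ (t ^ (α / 2) / (α / 2)) ^ 2 := pow_le_pow_left₀ (log_nonneg ht) hlog 2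
    _ = 4 / α ^ 2 * t ^ α := by rw [div_pow, hsq]; field_simp; ring

theorem abs_one_div_mul_sub_one_div_sq_le {a u : ℝ} (ha : 0 < a) (hu : |u| ≤ a / 2) :
    |1 / ((a - u) * (a + u)) - 1 / a ^ 2| ≤ 4 / 3 * u ^ 2 / a ^ 4 := by
  have hu2 : u ^ 2 ≤ a ^ 2 / 4 := by
    rw [← sq_abs]; nlinarith [abs_nonneg u]
  have hprod : 3 / 4 * a ^ 2 ≤ (a - u) * (a + u) := by nlinarith
  have hprod_pos : 0 < (a - u) * (a + u) := by nlinarith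
  have hdiff : 1 / ((a - u) * (a + u)) - 1 / a ^ 2 = u ^ 2 / (a ^ 2 * ((a - u) * (a + u))) := by
    rw [div_sub_div _ _ hprod_pos.ne' (by positivity),
      div_eq_div_iff (by positivity) (by positivity)]
    ring
  rw [hdiff, abs_of_nonneg (by positivity), div_le_div_iff₀ (by positivity) (by positivity)]
  nlinarith [mul_le_mul_of_nonneg_left hprod (by positivity : 0 ≤ u ^ 2 * a ^ 2)]

theorem integral_rpow_neg_add_one {s T : ℝ} (hs : 0 < s) (hT : 0 < T) :
    ∫ t in (1 : ℝ)..T, t ^ (-(s + 1)) = (1 - T ^ (-s)) / s := by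
  have hzero : (0 : ℝ) ∉ Set.uIcc 1 T := by
    rw [Set.mem_uIcc]; rintro (⟨h, -⟩ | ⟨h, -⟩) <;> linarith
  rw [integral_rpow (Or.inr ⟨by linarith, hzero⟩), show -(s + 1) + 1 = -s by ring, one_rpow]
  field_simp
  ring

/-- `L` stands for `log x`, so that `L / 2 ∓ log t` are `log (√x / t)` and `log (√x * t)`. -/
noncomputable def inverseLogsIntegrand (α L t : ℝ) : ℝ :=
  1 / (t ^ (2 * α + 1) * (L / 2 - log t) * (L / 2 + log t))

theorem abs_inverseLogsIntegrand_sub_le {α L t : ℝ} (hα : 0 < α) (hL : 0 < L) (ht : 1 ≤ t)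
    (htL : log t ≤ L / 4) :
    |inverseLogsIntegrand α L t - 4 / L ^ 2 * t ^ (-(2 * α + 1))|
      ≤ 256 / (3 * α ^ 2) / L ^ 4 * t ^ (-(α + 1)) := by
  have ht0 : 0 < t := by linarith
  have hfactor : inverseLogsIntegrand α L t - 4 / L ^ 2 * t ^ (-(2 * α + 1))
      = t ^ (-(2 * α + 1)) * (1 / ((L / 2 - log t) * (L / 2 + log t)) - 1 / (L / 2) ^ 2) := by
    rw [inverseLogsIntegrand, rpow_neg ht0.le, mul_assoc, ← one_div_mul_one_div]
    ring
  have hlog : |log t| ≤ L / 2 / 2 := by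
    rw [abs_of_nonneg (log_nonneg ht)]; linarith
  rw [hfactor, abs_mul, abs_of_pos (rpow_pos_of_pos ht0 _)]
  calc t ^ (-(2 * α + 1)) * |1 / ((L / 2 - log t) * (L / 2 + log t)) - 1 / (L / 2) ^ 2|
      ≤ t ^ (-(2 * α + 1)) * (4 / 3 * log t ^ 2 / (L / 2) ^ 4) := by
        gcongr; exact abs_one_div_mul_sub_one_div_sq_le (by positivity) hlog
    _ ≤ t ^ (-(2 * α + 1)) * (4 / 3 * (4 / α ^ 2 * t ^ α) / (L / 2) ^ 4) := by
        gcongr; exact sq_log_le_rpow hα ht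
    _ = 256 / (3 * α ^ 2) / L ^ 4 * (t ^ (-(2 * α + 1)) * t ^ α) := by ring
    _ = 256 / (3 * α ^ 2) / L ^ 4 * t ^ (-(α + 1)) := by rw [← rpow_add ht0]; ring_nf

theorem continuousOn_inverseLogsIntegrand {α L T : ℝ} (hL : 0 < L) (hTL : log T ≤ L / 4) :
    ContinuousOn (inverseLogsIntegrand α L) (Set.Icc 1 T) := by
  have hpos : ∀ t ∈ Set.Icc 1 T, 0 < t := fun t ht => by linarith [ht.1]
  refine continuousOn_const.div (by fun_prop (disch := exact fun t ht => (hpos t ht).ne')) ?_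
  intro t ht
  have hlog_le : log t ≤ log T := log_le_log (hpos t ht) ht.2
  have hlog_nonneg : 0 ≤ log t := log_nonneg ht.1
  have := rpow_pos_of_pos (hpos t ht) (2 * α + 1)
  have : 0 < L / 2 - log t := by linarith
  have : 0 < L / 2 + log t := by linarith
  positivity

theorem abs_integral_inverseLogsIntegrand_sub_le {α L T : ℝ} (hα : 0 < α) (hL : 0 < L)
    (hT : 1 ≤ T) (hTL : log T ≤ L / 4) :
    |(∫ t in (1 : ℝ)..T, inverseLogsIntegrand α L t)
        - ∫ t in (1 : ℝ)..T, 4 / L ^ 2 * t ^ (-(2 * α + 1))| ≤ 256 / (3 * α ^ 3) / L ^ 4 := by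
  have hzero : (0 : ℝ) ∉ Set.uIcc 1 T := by
    rw [Set.uIcc_of_le hT]; exact fun h => by linarith [h.1]
  have hf : IntervalIntegrable (inverseLogsIntegrand α L) volume 1 T :=
    (continuousOn_inverseLogsIntegrand (α := α) hL hTL).intervalIntegrable_of_Icc hT
  have hg : IntervalIntegrable (fun t => 4 / L ^ 2 * t ^ (-(2 * α + 1))) volume 1 T :=
    (intervalIntegral.intervalIntegrable_rpow (Or.inr hzero)).const_mul _
  have hb : IntervalIntegrable (fun t => 256 / (3 * α ^ 2) / L ^ 4 * t ^ (-(α + 1))) volume 1 T :=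
    (intervalIntegral.intervalIntegrable_rpow (Or.inr hzero)).const_mul _
  have hbound : ∀ t ∈ Set.Ioc 1 T, ‖inverseLogsIntegrand α L t - 4 / L ^ 2 * t ^ (-(2 * α + 1))‖
      ≤ 256 / (3 * α ^ 2) / L ^ 4 * t ^ (-(α + 1)) := fun t ht =>
    abs_inverseLogsIntegrand_sub_le hα hL ht.1.le
      ((log_le_log (by linarith [ht.1]) ht.2).trans hTL)
  rw [← intervalIntegral.integral_sub hf hg, ← norm_eq_abs]
  calc _ ≤ ∫ t in (1 : ℝ)..T, 256 / (3 * α ^ 2) / L ^ 4 * t ^ (-(α + 1)) :=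
        intervalIntegral.norm_integral_le_of_norm_le hT (ae_of_all _ hbound) hb
    _ = 256 / (3 * α ^ 2) / L ^ 4 * ((1 - T ^ (-α)) / α) := by
        rw [intervalIntegral.integral_const_mul, integral_rpow_neg_add_one hα (by linarith)]
    _ ≤ 256 / (3 * α ^ 2) / L ^ 4 * (1 / α) := by
        gcongr; linarith [rpow_nonneg (by linarith : (0 : ℝ) ≤ T) (-α)]
    _ = 256 / (3 * α ^ 3) / L ^ 4 := by field_simp

theorem integral_four_div_sq_mul_rpow_neg {α L T : ℝ} (hα : 0 < α) (hT : 0 < T) :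
    ∫ t in (1 : ℝ)..T, 4 / L ^ 2 * t ^ (-(2 * α + 1))
      = 2 / α * (1 / L ^ 2) * (1 - T ^ (-(2 * α))) := by
  rw [intervalIntegral.integral_const_mul, integral_rpow_neg_add_one (by positivity) hT]
  field_simp
  ring

theorem isBigO_integral_inverseLogsIntegrand {α : ℝ} (hα : 0 < α) :
    (fun L => (∫ t in (1 : ℝ)..L ^ (4 / α), inverseLogsIntegrand α L t) - 2 / α * (1 / L ^ 2))
      =O[atTop] fun L => 1 / L ^ 4 := by
  have hlog_small : ∀ᶠ L in atTop, 4 / α * log L ≤ L / 4 := by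
    filter_upwards [isLittleO_log_id_atTop.bound (c := α / 16) (by positivity),
      eventually_ge_atTop 1] with L hL hL1
    rw [norm_of_nonneg (log_nonneg hL1), id, norm_of_nonneg (by linarith)] at hL
    calc 4 / α * log L ≤ 4 / α * (α / 16 * L) := by gcongr
      _ = L / 4 := by field_simp; ring
  refine Asymptotics.IsBigO.of_bound (256 / (3 * α ^ 3) + 2 / α) ?_
  filter_upwards [hlog_small, eventually_ge_atTop 1] with L hL hL1
  have hL0 : 0 < L := by linarith
  set T := L ^ (4 / α) with hT
  have hT1 : 1 ≤ T := one_le_rpow hL1 (by positivity)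
  have hTL : log T ≤ L / 4 := by rwa [log_rpow hL0]
  have hT_neg : T ^ (-(2 * α)) = 1 / L ^ 8 := by
    rw [hT, ← rpow_mul hL0.le, show 4 / α * -(2 * α) = ((-8 : ℤ) : ℝ) by field_simp; norm_num,
      rpow_intCast, zpow_neg, one_div]
    norm_cast
  have hmain := integral_four_div_sq_mul_rpow_neg (L := L) hα (by linarith : 0 < T)
  have herror := abs_integral_inverseLogsIntegrand_sub_le hα hL0 hT1 hTL
  set I := ∫ t in (1 : ℝ)..T, inverseLogsIntegrand α L t
  set J := ∫ t in (1 : ℝ)..T, 4 / L ^ 2 * t ^ (-(2 * α + 1))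
  rw [hT_neg] at hmain
  rw [norm_eq_abs, norm_of_nonneg (by positivity)]
  calc |I - 2 / α * (1 / L ^ 2)| = |(I - J) - 2 / α * (1 / L ^ 10)| := by
        rw [hmain]; congr 1; field_simp; ring
    _ ≤ |I - J| + |2 / α * (1 / L ^ 10)| := abs_sub _ _
    _ ≤ 256 / (3 * α ^ 3) / L ^ 4 + 2 / α * (1 / L ^ 4) := by
        rw [abs_of_pos (by positivity : 0 < 2 / α * (1 / L ^ 10))]
        gcongr
        norm_num
    _ = (256 / (3 * α ^ 3) + 2 / α) * (1 / L ^ 4) := by ring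

/-- For `α > 0`,
`∫₁^{(log x)^{4/α}} dt/(t^{2α+1} log(√x/t) log(√x·t))
  = (2/α)·1/log²x + O(1/log⁴x)` as `x → ∞`. -/
theorem integral_inverse_logs_asymptotic (α : ℝ) (hα : 0 < α) :
    (fun x : ℝ =>
        (∫ t in (1:ℝ)..(Real.log x ^ ((4:ℝ) / α)),
            1 / (t ^ (2 * α + 1) * Real.log (Real.sqrt x / t) *
              Real.log (Real.sqrt x * t)))
        - (2 / α) * (1 / Real.log x ^ 2))
      =O[atTop] (fun x : ℝ => 1 / Real.log x ^ 4) := by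
  refine ((isBigO_integral_inverseLogsIntegrand hα).comp_tendsto tendsto_log_atTop).congr' ?_
    EventuallyEq.rfl
  filter_upwards [tendsto_log_atTop.eventually_ge_atTop 1, eventually_gt_atTop 0] with x hlog hx
  have hT : 1 ≤ log x ^ (4 / α) := one_le_rpow hlog (by positivity)
  refine congrArg (· - _) (intervalIntegral.integral_congr fun t ht => ?_)
  have ht0 : 0 < t := by rw [Set.uIcc_of_le hT] at ht; linarith [ht.1]
  have hsqrt : sqrt x ≠ 0 := sqrt_ne_zero'.2 hx
  rw [inverseLogsIntegrand, log_div hsqrt ht0.ne', log_mul hsqrt ht0.ne', log_sqrt hx.le]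
end
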